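/- Let λ > 0, t > 0, and x, x₀ ∈ ℝ. With h₊(x,t) = e^{−λt} e^{λx²} (√λ/√π) ∫_{−∞}^{x} e^{−λs²} ds, σ₋²(t) = (1 − e^{−2λt})/(2λ), σ₊²(t) = (e^{2λt} − 1)/(2λ) and m₊(t) = x₀ e^{λt}, one has the extended skew-Normal representation [h₊(x,t)/h₊(x₀,0)] · (2πσ₋²(t))^{−1/2} e^{−(x − x₀e^{−λt})²/(2σ₋²(t))} = (σ₊(t))^{−1} φ( (x − m₊(t))/σ₊(t) ) · Φ₀(√(2λ) x) / Φ₀(√(2λ) x₀), where φ(u) = (2π)^{−1/2} e^{−u²/2} and Φ₀(u) = (2π)^{−1/2} ∫_{−∞}^{u} e^{−s²/2} ds. -/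

import Mathlib

/-- The space–time harmonic function `h₊` of Theorem 4:
`h₊(x,t) = e^{-λt} e^{λx²} (√λ/√π) ∫_{-∞}^{x} e^{-λs²} ds`. -/
noncomputable def hPlus (lam x t : ℝ) : ℝ :=
  Real.exp (-lam * t) * Real.exp (lam * x ^ 2) * (Real.sqrt lam / Real.sqrt Real.pi) *
    ∫ s in Set.Iic x, Real.exp (-lam * s ^ 2)

/-- Standard Gaussian density `φ(u) = (2π)^{-1/2} e^{-u²/2}`. -/
noncomputable def phi (u : ℝ) : ℝ := (Real.sqrt (2 * Real.pi))⁻¹ * Real.exp (-u ^ 2 / 2)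

/-- Standard Gaussian cumulative distribution function
`Φ₀(u) = (2π)^{-1/2} ∫_{-∞}^{u} e^{-s²/2} ds`. -/
noncomputable def Phi0 (u : ℝ) : ℝ :=
  (Real.sqrt (2 * Real.pi))⁻¹ * ∫ s in Set.Iic u, Real.exp (-s ^ 2 / 2)

open MeasureTheory Set Real

lemma my_integral_comp_mul_left_Iic (g : ℝ → ℝ) (a : ℝ) {b : ℝ} (hb : 0 < b) :
    (∫ x in Iic a, g (b * x)) = b⁻¹ • ∫ x in Iic (b * a), g x := by
  have : ∀ c : ℝ, MeasurableSet (Iic c) := fun c => measurableSet_Iic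
  rw [← integral_indicator (this a), ← integral_indicator (this (b * a)),
    ← abs_of_pos (inv_pos.mpr hb), ← Measure.integral_comp_mul_left]
  congr
  ext1 x
  rw [← Set.indicator_comp_right, show HMul.hMul b ⁻¹' Iic (b * a) = Iic (b * a / b) from preimage_const_mul_Iic₀ _ hb, mul_div_cancel_left₀ _ hb.ne']
  rfl

lemma Phi0_pos (u : ℝ) : 0 < Phi0 u := by
  have hπ : 0 < Real.sqrt (2 * Real.pi) := Real.sqrt_pos.mpr (by positivity)
  refine mul_pos (inv_pos.mpr hπ) ?_
  have hint : IntegrableOn (fun s : ℝ => Real.exp (-s ^ 2 / 2)) (Iic u) := by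
    have := (integrable_exp_neg_mul_sq (by norm_num : (0:ℝ) < 1/2)).integrableOn (s := Iic u)
    refine this.congr_fun (fun s _ => by ring_nf) measurableSet_Iic
  rw [setIntegral_pos_iff_support_of_nonneg_ae
    (Filter.Eventually.of_forall (fun s => (Real.exp_pos _).le)) hint]
  have : Function.support (fun s : ℝ => Real.exp (-s ^ 2 / 2)) = Set.univ := by
    ext s; simp [Function.mem_support, (Real.exp_pos _).ne']
  rw [this, Set.univ_inter]
  simp [Real.volume_Iic]

lemma hPlus_eq (lam x t : ℝ) (hlam : 0 < lam) :
    hPlus lam x t =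
      Real.exp (-lam * t) * Real.exp (lam * x ^ 2) * Phi0 (Real.sqrt (2 * lam) * x) := by
  have hb : 0 < Real.sqrt (2 * lam) := Real.sqrt_pos.mpr (by linarith)
  have hsub : (∫ s in Iic x, Real.exp (-lam * s ^ 2))
      = (Real.sqrt (2 * lam))⁻¹ * ∫ r in Iic (Real.sqrt (2 * lam) * x), Real.exp (-r ^ 2 / 2) := by
    have h1 : ∀ s : ℝ, Real.exp (-lam * s ^ 2)
        = Real.exp (-(Real.sqrt (2 * lam) * s) ^ 2 / 2) := by
      intro s
      congr 1
      rw [mul_pow, Real.sq_sqrt (by linarith : (0:ℝ) ≤ 2 * lam)]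
      ring
    have h2 := my_integral_comp_mul_left_Iic (fun r => Real.exp (-r ^ 2 / 2)) x hb
    simp only [smul_eq_mul] at h2
    rw [setIntegral_congr_fun measurableSet_Iic (fun s _ => h1 s)]
    exact h2
  have hconst : Real.sqrt lam / Real.sqrt Real.pi * (Real.sqrt (2 * lam))⁻¹
      = (Real.sqrt (2 * Real.pi))⁻¹ := by
    rw [Real.sqrt_mul (by norm_num) lam, Real.sqrt_mul (by norm_num) Real.pi]
    have h2 : (0:ℝ) < Real.sqrt 2 := Real.sqrt_pos.mpr (by norm_num)
    have hl : (0:ℝ) < Real.sqrt lam := Real.sqrt_pos.mpr hlam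
    have hp : (0:ℝ) < Real.sqrt Real.pi := Real.sqrt_pos.mpr Real.pi_pos
    field_simp
  rw [hPlus, hsub, Phi0, ← hconst]
  ring

/-- Theorem 4, explicit extended skew-Normal form: with
`σ₋²(t) = (1-e^{-2λt})/(2λ)`, `σ₊²(t) = (e^{2λt}-1)/(2λ)` and `m₊(t) = x₀e^{λt}`,
`(h₊(x,t)/h₊(x₀,0)) (2πσ₋²)^{-1/2} e^{-(x-x₀e^{-λt})²/(2σ₋²)}
  = σ₊⁻¹ φ((x-m₊)/σ₊) Φ₀(√(2λ)x)/Φ₀(√(2λ)x₀)`. -/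
theorem stmt_19 (lam t x x₀ : ℝ) (hlam : 0 < lam) (ht : 0 < t) :
    (hPlus lam x t / hPlus lam x₀ 0) *
      ((Real.sqrt (2 * Real.pi * ((1 - Real.exp (-2 * lam * t)) / (2 * lam))))⁻¹ *
        Real.exp (-(x - x₀ * Real.exp (-lam * t)) ^ 2 /
          (2 * ((1 - Real.exp (-2 * lam * t)) / (2 * lam)))))
    = (Real.sqrt ((Real.exp (2 * lam * t) - 1) / (2 * lam)))⁻¹ *
        phi ((x - x₀ * Real.exp (lam * t)) / Real.sqrt ((Real.exp (2 * lam * t) - 1) / (2 * lam))) *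
        (Phi0 (Real.sqrt (2 * lam) * x) / Phi0 (Real.sqrt (2 * lam) * x₀)) := by
  have hE0 : 0 < Real.exp (lam * t) := Real.exp_pos _
  have hE1 : 1 < Real.exp (lam * t) := by
    rw [show (1:ℝ) = Real.exp 0 by simp]
    exact Real.exp_lt_exp.mpr (by positivity)
  set E := Real.exp (lam * t) with hEdef
  have hEsq : 0 < E ^ 2 - 1 := by nlinarith
  have hEneg : Real.exp (-lam * t) = E⁻¹ := by
    rw [hEdef, ← Real.exp_neg]; ring_nf
  have hE2 : Real.exp (2 * lam * t) = E ^ 2 := by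
    rw [show 2 * lam * t = lam * t + lam * t by ring, Real.exp_add, hEdef, sq]
  have hEneg2 : Real.exp (-2 * lam * t) = (E ^ 2)⁻¹ := by
    rw [show -2 * lam * t = -(2 * lam * t) by ring, Real.exp_neg, hE2]
  have ha : (1 - Real.exp (-2 * lam * t)) / (2 * lam) = (E ^ 2 - 1) / (2 * lam * E ^ 2) := by
    rw [hEneg2]; field_simp
  have hbpos : 0 < (E ^ 2 - 1) / (2 * lam) := by positivity
  have hapos : 0 < (E ^ 2 - 1) / (2 * lam * E ^ 2) := by positivity
  set b := (E ^ 2 - 1) / (2 * lam) with hbdef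
  set a := (E ^ 2 - 1) / (2 * lam * E ^ 2) with hadef
  have hab : b = E ^ 2 * a := by rw [hbdef, hadef]; field_simp
  have hsqb : Real.sqrt b = E * Real.sqrt a := by
    rw [hab, Real.sqrt_mul (by positivity), Real.sqrt_sq hE0.le]
  have hsq2pa : Real.sqrt (2 * Real.pi * a) = Real.sqrt (2 * Real.pi) * Real.sqrt a := by
    rw [Real.sqrt_mul (by positivity)]
  -- rewrite hPlus
  rw [hPlus_eq lam x t hlam, hPlus_eq lam x₀ 0 hlam, phi, hE2, ha]
  rw [div_pow, Real.sq_sqrt hbpos.le]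
  rw [hEneg]
  have hK : Real.exp (lam * x ^ 2) * Real.exp (-(x - x₀ * E⁻¹) ^ 2 / (2 * a))
      = Real.exp (lam * x₀ ^ 2) * Real.exp (-(x - x₀ * E) ^ 2 / (2 * b)) := by
    rw [← Real.exp_add, ← Real.exp_add]
    congr 1
    rw [hadef, hbdef]
    field_simp
    ring
  have hX : Real.exp (lam * x ^ 2) ≠ 0 := (Real.exp_pos _).ne'
  have hU : Real.exp (-(x - x₀ * E⁻¹) ^ 2 / (2 * a))
      = Real.exp (lam * x₀ ^ 2) * Real.exp (-(x - x₀ * E) ^ 2 / (2 * b))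
        / Real.exp (lam * x ^ 2) := by
    rw [eq_div_iff hX]; linear_combination hK
  have hΦ : 0 < Phi0 (Real.sqrt (2 * lam) * x₀) := Phi0_pos _
  have hsa : 0 < Real.sqrt a := Real.sqrt_pos.mpr hapos
  have hs2π : 0 < Real.sqrt (2 * Real.pi) := Real.sqrt_pos.mpr (by positivity)
  have hX0 : Real.exp (lam * x₀ ^ 2) ≠ 0 := (Real.exp_pos _).ne'
  rw [hsqb, hsq2pa, hU]
  simp only [mul_zero, neg_zero, Real.exp_zero, one_mul]
  generalize Phi0 (Real.sqrt (2 * lam) * x) = Px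
  generalize hgen : Phi0 (Real.sqrt (2 * lam) * x₀) = Px₀ at hΦ ⊢
  generalize hgen2 : Real.sqrt a = Sa at hsa ⊢
  generalize hgen3 : Real.sqrt (2 * Real.pi) = Sp at hs2π ⊢
  generalize hgen4 : Real.exp (lam * x ^ 2) = X at hX ⊢
  generalize hgen5 : Real.exp (lam * x₀ ^ 2) = X₀ at hX0 ⊢
  field_simp
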